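/- Let V be a k-dimensional totally null complex subspace of ℂⁿ with the standard Hermitian form of signature (l,j), l ≥ j ≥ k. Then the real Lie algebra h of all a ∈ su(l,j) with a(ℂⁿ) ⊆ V has real dimension k². -/

import Mathlib

/-! Let `P` be an `n × k` matrix whose columns form a basis of `V`; total nullity of `V` says
`Pᴴ η P = 0`. A matrix `a` is `η`-skew-adjoint exactly when `a η` is skew-Hermitian, and a
skew-Hermitian `C` whose range lies in `V` equals `P N Pᴴ` with `N = L C Lᴴ` skew-Hermitian,
where `L = (Pᴴ P)⁻¹ Pᴴ` is the left inverse of `P`. Hence `N ↦ P N Pᴴ η` is a real-linear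
bijection from the skew-Hermitian `k × k` matrices onto `h`; the trace condition comes for free,
as `tr (P N Pᴴ η) = tr (N Pᴴ η P) = 0`. Multiplication by `i` identifies skew-Hermitian with
Hermitian matrices, which are complementary in `Mₖ(ℂ)`, so their real dimension is `k²`. -/

open Matrix

/-- The diagonal matrix of the Hermitian form of signature `(l, n − l)` on `ℂⁿ`. -/
noncomputable def etaMat (l n : ℕ) : Matrix (Fin n) (Fin n) ℂ :=
  Matrix.diagonal fun i => if (i : ℕ) < l then (1 : ℂ) else -1

/-- The real subspace `h = {a ∈ su(l, n−l) : range a ⊆ V}` of the complex `n × n`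
matrices: traceless matrices, skew-adjoint for the Hermitian form determined by
`etaMat l n`, whose range is contained in `V`. -/
noncomputable def hSub (l n : ℕ) (V : Submodule ℂ (Fin n → ℂ)) :
    Submodule ℝ (Matrix (Fin n) (Fin n) ℂ) where
  carrier := {a | Matrix.trace a = 0 ∧ aᴴ * etaMat l n + etaMat l n * a = 0 ∧
    ∀ x : Fin n → ℂ, a.mulVec x ∈ V}
  zero_mem' := ⟨by simp, by simp, fun x => by simp [Matrix.zero_mulVec]⟩
  add_mem' := by
    rintro a b ⟨ta, sa, ra⟩ ⟨tb, sb, rb⟩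
    refine ⟨by simp [ta, tb], ?_, fun x => ?_⟩
    · rw [Matrix.conjTranspose_add, Matrix.add_mul, Matrix.mul_add,
        show aᴴ * etaMat l n + bᴴ * etaMat l n + (etaMat l n * a + etaMat l n * b)
          = (aᴴ * etaMat l n + etaMat l n * a) + (bᴴ * etaMat l n + etaMat l n * b) from by abel,
        sa, sb, add_zero]
    · rw [Matrix.add_mulVec]
      exact V.add_mem (ra x) (rb x)
  smul_mem' := by
    rintro c a ⟨ta, sa, ra⟩
    refine ⟨by rw [Matrix.trace_smul, ta, smul_zero], ?_, fun x => ?_⟩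
    · rw [Matrix.conjTranspose_smul, star_trivial, Matrix.smul_mul, Matrix.mul_smul,
        ← smul_add, sa, smul_zero]
    · rw [Matrix.smul_mulVec]
      exact V.smul_of_tower_mem c (ra x)

section SkewAdjoint

variable {A : Type*} [AddCommGroup A] [Module ℂ A] [Module ℝ A] [IsScalarTower ℝ ℂ A]
  [StarAddMonoid A] [StarModule ℂ A] [StarModule ℝ A]

noncomputable def selfAdjointEquivSkewAdjoint : selfAdjoint A ≃ₗ[ℝ] skewAdjoint A where
  toFun x := ⟨Complex.I • (x : A), x.2.I_smul_mem_skewAdjoint⟩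
  invFun y := ⟨-Complex.I • (y : A), by
    rw [neg_smul]; exact (IsSelfAdjoint.I_smul_of_mem_skewAdjoint y.2).neg⟩
  map_add' x y := by ext; simp
  map_smul' c x := by ext; exact smul_comm _ _ _
  left_inv x := by ext; simp [smul_smul]
  right_inv y := by ext; simp [smul_smul]

theorem finrank_real_skewAdjoint [FiniteDimensional ℂ A] :
    Module.finrank ℝ (skewAdjoint A) = Module.finrank ℂ A := by
  have : FiniteDimensional ℝ A := Module.Finite.trans ℂ A
  have : FiniteDimensional ℝ (selfAdjoint A) :=
    inferInstanceAs (FiniteDimensional ℝ (selfAdjoint.submodule ℝ A))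
  have : FiniteDimensional ℝ (skewAdjoint A) :=
    inferInstanceAs (FiniteDimensional ℝ (skewAdjoint.submodule ℝ A))
  have h := (StarModule.decomposeProdAdjoint ℝ A).finrank_eq
  rw [Module.finrank_prod, selfAdjointEquivSkewAdjoint.finrank_eq,
    ← Module.finrank_mul_finrank ℝ ℂ A, Complex.finrank_real_complex] at h
  omega

end SkewAdjoint

theorem finrank_skewAdjoint_matrix (κ : Type*) [Fintype κ] :
    Module.finrank ℝ (skewAdjoint.submodule ℝ (Matrix κ κ ℂ)) = Fintype.card κ ^ 2 := by
  change Module.finrank ℝ (skewAdjoint (Matrix κ κ ℂ)) = _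
  rw [finrank_real_skewAdjoint, Module.finrank_matrix, Module.finrank_self, mul_one, sq]

theorem exists_mulVec_injective_and_range_eq {m K : Type*} [Fintype m] [Field K] {k : ℕ}
    (V : Submodule K (m → K)) (hV : Module.finrank K V = k) :
    ∃ P : Matrix m (Fin k) K, Function.Injective P.mulVec ∧ LinearMap.range P.mulVecLin = V := by
  let e : (Fin k → K) ≃ₗ[K] V := LinearEquiv.ofFinrankEq _ _ (by simp [hV])
  let P := LinearMap.toMatrix' (V.subtype ∘ₗ e.toLinearMap)
  have hP : P.mulVecLin = V.subtype ∘ₗ e.toLinearMap := by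
    rw [← Matrix.toLin'_apply', Matrix.toLin'_toMatrix']
  refine ⟨P, ?_, ?_⟩
  · change Function.Injective P.mulVecLin
    rw [hP]
    exact V.injective_subtype.comp e.injective
  · rw [hP, LinearMap.range_comp, LinearEquiv.range, Submodule.map_top, Submodule.range_subtype]

theorem isUnit_conjTranspose_mul_self_of_injective {m κ K : Type*} [Fintype m] [Fintype κ]
    [DecidableEq κ] [Field K] [PartialOrder K] [StarRing K] [StarOrderedRing K]
    {P : Matrix m κ K} (hP : Function.Injective P.mulVec) : IsUnit (Pᴴ * P) := by
  rw [← Matrix.mulVec_injective_iff_isUnit]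
  have h := ker_mulVecLin_conjTranspose_mul_self P
  rw [(LinearMap.ker_eq_bot (f := P.mulVecLin)).mpr hP] at h
  exact LinearMap.ker_eq_bot.mp h

section GramLeftInv

variable {m κ R : Type*} [Fintype m] [Fintype κ] [DecidableEq κ] [CommRing R] [StarRing R]
  {P : Matrix m κ R}

variable (P) in
noncomputable def gramLeftInv : Matrix κ m R := (Pᴴ * P)⁻¹ * Pᴴ

theorem gramLeftInv_mul (hP : IsUnit (Pᴴ * P)) : gramLeftInv P * P = 1 := by
  rw [gramLeftInv, Matrix.mul_assoc,
    Matrix.nonsing_inv_mul _ ((Matrix.isUnit_iff_isUnit_det _).mp hP)]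

theorem conjTranspose_mul_conjTranspose_gramLeftInv (hP : IsUnit (Pᴴ * P)) :
    Pᴴ * (gramLeftInv P)ᴴ = 1 := by
  rw [← conjTranspose_mul, gramLeftInv_mul hP, conjTranspose_one]

theorem gramLeftInv_mul_mul_conjTranspose (hP : IsUnit (Pᴴ * P)) (N : Matrix κ κ R) :
    gramLeftInv P * (P * N * Pᴴ) * (gramLeftInv P)ᴴ = N := by
  calc _ = (gramLeftInv P * P) * N * (Pᴴ * (gramLeftInv P)ᴴ) := by simp only [Matrix.mul_assoc]
    _ = N := by
      rw [gramLeftInv_mul hP, conjTranspose_mul_conjTranspose_gramLeftInv hP, Matrix.one_mul,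
        Matrix.mul_one]

theorem mul_gramLeftInv_mul_of_range [DecidableEq m] (hP : IsUnit (Pᴴ * P)) {C : Matrix m m R}
    (hrange : ∀ x, C *ᵥ x ∈ LinearMap.range P.mulVecLin) : P * gramLeftInv P * C = C := by
  refine Matrix.ext_of_mulVec_single fun i => ?_
  obtain ⟨y, hy⟩ := hrange (Pi.single i 1)
  rw [← Matrix.mulVec_mulVec, ← hy, mulVecLin_apply, Matrix.mulVec_mulVec, Matrix.mul_assoc,
    gramLeftInv_mul hP, Matrix.mul_one]

theorem eq_mul_mul_conjTranspose_of_mem_skewAdjoint [DecidableEq m] (hP : IsUnit (Pᴴ * P))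
    {C : Matrix m m R} (hC : C ∈ skewAdjoint (Matrix m m R))
    (hrange : ∀ x, C *ᵥ x ∈ LinearMap.range P.mulVecLin) :
    C = P * (gramLeftInv P * C * (gramLeftInv P)ᴴ) * Pᴴ := by
  have hleft := mul_gramLeftInv_mul_of_range hP hrange
  have hright : C * (P * gramLeftInv P)ᴴ = C := by
    have h := congrArg conjTranspose hleft
    rwa [conjTranspose_mul, show Cᴴ = -C from hC, Matrix.neg_mul, neg_inj] at h
  calc C = P * gramLeftInv P * C * (P * gramLeftInv P)ᴴ := by rw [hleft, hright]
    _ = _ := by simp only [conjTranspose_mul, Matrix.mul_assoc]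

end GramLeftInv

section SandwichMul

variable {m κ : Type*} [Fintype m] [Fintype κ] {P : Matrix m κ ℂ}

variable (P) in
noncomputable def sandwichMul (η : Matrix m m ℂ) : Matrix κ κ ℂ →ₗ[ℝ] Matrix m m ℂ where
  toFun N := P * N * Pᴴ * η
  map_add' N N' := by simp only [Matrix.mul_add, Matrix.add_mul]
  map_smul' c N := by simp only [Matrix.mul_smul, Matrix.smul_mul, RingHom.id_apply]

@[simp]
theorem sandwichMul_apply (η : Matrix m m ℂ) (N : Matrix κ κ ℂ) :
    sandwichMul P η N = P * N * Pᴴ * η :=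
  rfl

theorem sandwichMul_injective [DecidableEq m] [DecidableEq κ] (hP : IsUnit (Pᴴ * P))
    {η : Matrix m m ℂ} (hη : η * η = 1) : Function.Injective (sandwichMul P η) := by
  intro N N' h
  have h' : P * N * Pᴴ = P * N' * Pᴴ := by
    simpa only [sandwichMul_apply, Matrix.mul_assoc, hη, Matrix.mul_one] using
      congrArg (· * η) h
  simpa only [gramLeftInv_mul_mul_conjTranspose hP] using
    congrArg (fun M => gramLeftInv P * M * (gramLeftInv P)ᴴ) h'

end SandwichMul

theorem etaMat_mul_self (l n : ℕ) : etaMat l n * etaMat l n = 1 := by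
  rw [etaMat, diagonal_mul_diagonal, ← diagonal_one]
  congr 1; ext i; split_ifs <;> norm_num

theorem etaMat_conjTranspose (l n : ℕ) : (etaMat l n)ᴴ = etaMat l n := by
  rw [etaMat, diagonal_conjTranspose]
  congr 1; ext i; split_ifs <;> simp [*]

section hSub

variable {l n k : ℕ} {V : Submodule ℂ (Fin n → ℂ)} {P : Matrix (Fin n) (Fin k) ℂ}

theorem conjTranspose_mul_etaMat_mul_eq_zero (hPV : ∀ y, P *ᵥ y ∈ V)
    (hnull : ∀ v ∈ V, ∀ w ∈ V,
      ∑ i : Fin n, (if (i : ℕ) < l then (1 : ℂ) else -1) * (starRingEnd ℂ) (v i) * w i = 0) :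
    Pᴴ * etaMat l n * P = 0 := by
  ext s t
  have h := hnull _ (hPV (Pi.single s 1)) _ (hPV (Pi.single t 1))
  simp only [mulVec_single_one, col_apply] at h
  rw [Matrix.zero_apply, ← h, etaMat, Matrix.mul_apply]
  refine Finset.sum_congr rfl fun i _ => ?_
  rw [mul_diagonal, conjTranspose_apply, Complex.star_def]
  ring

theorem sandwichMul_mem_hSub (hPV : ∀ y, P *ᵥ y ∈ V) (hnull : Pᴴ * etaMat l n * P = 0)
    {N : Matrix (Fin k) (Fin k) ℂ} (hN : N ∈ skewAdjoint (Matrix (Fin k) (Fin k) ℂ)) :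
    sandwichMul P (etaMat l n) N ∈ hSub l n V := by
  have hN' : Nᴴ = -N := hN
  refine ⟨?_, ?_, fun x => ?_⟩
  · rw [sandwichMul_apply, show P * N * Pᴴ * etaMat l n = P * (N * Pᴴ * etaMat l n) by
        simp only [Matrix.mul_assoc], trace_mul_comm,
      show N * Pᴴ * etaMat l n * P = N * (Pᴴ * etaMat l n * P) by simp only [Matrix.mul_assoc],
      hnull, Matrix.mul_zero, trace_zero]
  · simp only [sandwichMul_apply, conjTranspose_mul, conjTranspose_conjTranspose,
      etaMat_conjTranspose, hN', Matrix.mul_neg, Matrix.neg_mul, Matrix.mul_assoc, neg_add_cancel]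
  · rw [sandwichMul_apply, Matrix.mul_assoc, Matrix.mul_assoc, ← mulVec_mulVec]
    exact hPV _

theorem exists_sandwichMul_eq_of_mem_hSub (hP : IsUnit (Pᴴ * P))
    (hPV : LinearMap.range P.mulVecLin = V) {A : Matrix (Fin n) (Fin n) ℂ}
    (hA : A ∈ hSub l n V) :
    ∃ N ∈ skewAdjoint (Matrix (Fin k) (Fin k) ℂ), sandwichMul P (etaMat l n) N = A := by
  obtain ⟨-, hskew, hrange⟩ := hA
  set η := etaMat l n
  have hC : (A * η)ᴴ = -(A * η) := by
    have hAη : Aᴴ * η = -(η * A) := eq_neg_of_add_eq_zero_left hskew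
    calc (A * η)ᴴ = η * (Aᴴ * η) * η := by
          rw [conjTranspose_mul, etaMat_conjTranspose, Matrix.mul_assoc, Matrix.mul_assoc,
            etaMat_mul_self, Matrix.mul_one]
      _ = -(A * η) := by
          rw [hAη, Matrix.mul_neg, Matrix.neg_mul, ← Matrix.mul_assoc, etaMat_mul_self,
            Matrix.one_mul]
  have hCrange : ∀ x, (A * η) *ᵥ x ∈ LinearMap.range P.mulVecLin := fun x => by
    rw [hPV, ← mulVec_mulVec]; exact hrange _
  refine ⟨gramLeftInv P * (A * η) * (gramLeftInv P)ᴴ, ?_, ?_⟩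
  · change (gramLeftInv P * (A * η) * (gramLeftInv P)ᴴ)ᴴ = -_
    rw [conjTranspose_mul, conjTranspose_mul, conjTranspose_conjTranspose, hC]
    simp only [Matrix.mul_neg, Matrix.neg_mul, Matrix.mul_assoc]
  · rw [sandwichMul_apply, ← eq_mul_mul_conjTranspose_of_mem_skewAdjoint hP hC hCrange,
      Matrix.mul_assoc, etaMat_mul_self, Matrix.mul_one]

theorem hSub_eq_map_sandwichMul (hP : IsUnit (Pᴴ * P)) (hPV : LinearMap.range P.mulVecLin = V)
    (hnull : Pᴴ * etaMat l n * P = 0) :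
    hSub l n V = (skewAdjoint.submodule ℝ _).map (sandwichMul P (etaMat l n)) := by
  ext A
  refine ⟨exists_sandwichMul_eq_of_mem_hSub hP hPV, ?_⟩
  rintro ⟨N, hN, rfl⟩
  exact sandwichMul_mem_hSub (fun y => hPV ▸ LinearMap.mem_range_self _ y) hnull hN

end hSub

theorem stmt14_general (l j k : ℕ)
    (V : Submodule ℂ (Fin (l + j) → ℂ)) (hdim : Module.finrank ℂ V = k)
    (hnull : ∀ v ∈ V, ∀ w ∈ V,
      ∑ i : Fin (l + j),
        (if (i : ℕ) < l then (1 : ℂ) else -1) * (starRingEnd ℂ) (v i) * w i = 0) :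
    Module.finrank ℝ (hSub l (l + j) V) = k ^ 2 := by
  obtain ⟨P, hPinj, hPV⟩ := exists_mulVec_injective_and_range_eq V hdim
  have hP : IsUnit (Pᴴ * P) := by
    open scoped ComplexOrder in exact isUnit_conjTranspose_mul_self_of_injective hPinj
  have hnullP := conjTranspose_mul_etaMat_mul_eq_zero
    (fun y => hPV ▸ LinearMap.mem_range_self P.mulVecLin y) hnull
  have hinj := sandwichMul_injective hP (etaMat_mul_self l (l + j))
  rw [hSub_eq_map_sandwichMul hP hPV hnullP,
    ← (Submodule.equivMapOfInjective _ hinj _).finrank_eq, finrank_skewAdjoint_matrix,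
    Fintype.card_fin]

/-- If `V` is a `k`-dimensional totally null complex subspace of `ℂⁿ` with the Hermitian
form of signature `(l,j)` (`n = l + j`, `l ≥ j ≥ k`), then the real Lie algebra of all
`a ∈ su(l,j)` with `a(ℂⁿ) ⊆ V` has real dimension `k²`. -/
theorem stmt14 (l j k : ℕ) (hkj : k ≤ j) (hjl : j ≤ l)
    (V : Submodule ℂ (Fin (l + j) → ℂ)) (hdim : Module.finrank ℂ V = k)
    (hnull : ∀ v ∈ V, ∀ w ∈ V,
      ∑ i : Fin (l + j),
        (if (i : ℕ) < l then (1 : ℂ) else -1) * (starRingEnd ℂ) (v i) * w i = 0) :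
    Module.finrank ℝ (hSub l (l + j) V) = k ^ 2 :=
  stmt14_general l j k V hdim hnull
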